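/- arXiv:1310.5675 — 5 statements merged into one kernel-verified Lean document; each statement's English description precedes it below -/
import Mathlib

section
/- The maximal area of a triangle inscribed in a closed disk of radius R in the plane is (3√3/4)·R², attained by an equilateral triangle inscribed in the boundary circle. -/
/-!
The triangle `x y w` is the image of the standard triangle under an affine map of determinant
`cross (y - x) (w - x)`, so its area is `|cross (y - x) (w - x)| / 2`. Weitzenböck's inequality bounds `2√3` times this area by the sum of
the squared side lengths, and for three points of the disk `closedBall z R` that sum is
`3 ∑ ‖p - z‖² - ‖∑ (p - z)‖² ≤ 9 R²`. Equality holds throughout for an equilateral triangle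
inscribed in the boundary circle.
-/

open Real MeasureTheory Metric Set
open scoped Pointwise

local notation "ℝ²" => EuclideanSpace ℝ (Fin 2)

def stdTriangle : Set (ℝ × ℝ) := {p | 0 ≤ p.1 ∧ 0 ≤ p.2 ∧ p.1 + p.2 ≤ 1}

lemma isClosed_stdTriangle : IsClosed stdTriangle :=
  (isClosed_le continuous_const continuous_fst).inter <|
    (isClosed_le continuous_const continuous_snd).inter <|
      isClosed_le (continuous_fst.add continuous_snd) continuous_const

lemma volume_stdTriangle : volume stdTriangle = ENNReal.ofReal (1 / 2) := by
  have slice (a : ℝ) : volume (Prod.mk a ⁻¹' stdTriangle) =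
      (Icc 0 1).indicator (fun a => ENNReal.ofReal (1 - a)) a := by
    by_cases ha : a ∈ Icc 0 1
    · have : Prod.mk a ⁻¹' stdTriangle = Icc 0 (1 - a) := by
        ext b
        simp only [stdTriangle, mem_preimage, mem_ofPred_eq, mem_Icc]
        constructor
        · rintro ⟨-, hb, hab⟩
          exact ⟨hb, by linarith⟩
        · rintro ⟨hb, hab⟩
          exact ⟨ha.1, hb, by linarith⟩
      simp [this, ha]
    · have : Prod.mk a ⁻¹' stdTriangle = ∅ := by
        ext b
        simp only [stdTriangle, mem_preimage, mem_ofPred_eq, mem_empty_iff_false, iff_false]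
        rintro ⟨h0, hb, hab⟩
        exact ha ⟨h0, by linarith⟩
      simp [this, ha]
  rw [Measure.volume_eq_prod, Measure.prod_apply isClosed_stdTriangle.measurableSet]
  simp_rw [slice]
  rw [lintegral_indicator measurableSet_Icc, ← ofReal_integral_eq_lintegral_ofReal]
  · rw [integral_Icc_eq_integral_Ioc, ← intervalIntegral.integral_of_le zero_le_one,
      intervalIntegral.integral_sub intervalIntegrable_const
        intervalIntegral.intervalIntegrable_id]
    norm_num [integral_id]
  · exact (continuous_const.sub continuous_id).integrableOn_Icc
  · filter_upwards [ae_restrict_mem measurableSet_Icc] with a ha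
    exact sub_nonneg.2 ha.2

lemma convexHull_zero_single_single :
    convexHull ℝ {0, EuclideanSpace.single 0 1, EuclideanSpace.single 1 1} =
      (fun v : ℝ² => (v 0, v 1)) ⁻¹' stdTriangle := by
  apply Subset.antisymm
  · refine convexHull_min ?_ ?_
    · rintro v (rfl | rfl | rfl) <;> norm_num [stdTriangle]
    · rintro p ⟨hp0, hp1, hp⟩ q ⟨hq0, hq1, hq⟩ a b ha hb hab
      simp only [stdTriangle, mem_preimage, mem_ofPred_eq, PiLp.add_apply, PiLp.smul_apply,
        smul_eq_mul]
      exact ⟨by positivity, by positivity, by nlinarith⟩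
  · rintro v ⟨h0, h1, h01⟩
    have hmem := (convex_convexHull ℝ
      ({0, EuclideanSpace.single 0 1, EuclideanSpace.single 1 1} : Set ℝ²)).sum_mem
      (t := Finset.univ)
      (w := ![1 - v 0 - v 1, v 0, v 1])
      (z := ![0, EuclideanSpace.single 0 1, EuclideanSpace.single 1 1])
      (fun i _ => by fin_cases i <;> simp <;> linarith) (by simp [Fin.sum_univ_three]; ring)
      (fun i _ => subset_convexHull ℝ _ (by fin_cases i <;> simp))
    convert hmem
    ext i
    fin_cases i <;> simp [Fin.sum_univ_three]

def cross (u v : ℝ²) : ℝ := u 0 * v 1 - u 1 * v 0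

lemma det_basisFun_constr (u v : ℝ²) :
    LinearMap.det ((EuclideanSpace.basisFun (Fin 2) ℝ).toBasis.constr ℝ ![u, v]) = cross u v := by
  rw [← LinearMap.det_toMatrix (EuclideanSpace.basisFun (Fin 2) ℝ).toBasis, Matrix.det_fin_two]
  simp [LinearMap.toMatrix_apply, cross]
  ring

theorem volume_convexHull_zero_pair (u v : ℝ²) :
    volume (convexHull ℝ {0, u, v}) = ENNReal.ofReal (|cross u v| / 2) := by
  set L := (EuclideanSpace.basisFun (Fin 2) ℝ).toBasis.constr ℝ ![u, v]
  have hL : L '' convexHull ℝ {0, EuclideanSpace.single 0 1, EuclideanSpace.single 1 1} =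
      convexHull ℝ {0, u, v} := by
    rw [LinearMap.image_convexHull]
    simp [image_insert_eq, L]
  have hstd : volume (convexHull ℝ {0, EuclideanSpace.single 0 1, EuclideanSpace.single 1 1} :
      Set ℝ²) = volume stdTriangle := by
    rw [convexHull_zero_single_single]
    exact ((volume_preserving_finTwoArrow ℝ).comp (PiLp.volume_preserving_ofLp (Fin 2))
      ).measure_preimage isClosed_stdTriangle.measurableSet.nullMeasurableSet
  rw [← hL, Measure.addHaar_image_linearMap, det_basisFun_constr, hstd, volume_stdTriangle,
    ← ENNReal.ofReal_mul (abs_nonneg _)]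
  ring_nf

theorem volume_convexHull_triple (x y w : ℝ²) :
    volume (convexHull ℝ {x, y, w}) = ENNReal.ofReal (|cross (y - x) (w - x)| / 2) := by
  have htrans : convexHull ℝ {x, y, w} = x +ᵥ convexHull ℝ {0, y - x, w - x} := by
    rw [← convexHull_vadd]
    simp [vadd_set_insert]
  rw [htrans, measure_vadd, volume_convexHull_zero_pair]

/-- Weitzenböck's inequality. -/
lemma sqrt_three_mul_cross_le (u v : ℝ²) :
    √3 * cross u v ≤ (‖u‖ ^ 2 + ‖v‖ ^ 2 + ‖u - v‖ ^ 2) / 2 := by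
  simp only [EuclideanSpace.real_norm_sq_eq, Fin.sum_univ_two, PiLp.sub_apply, cross]
  -- the defect is `‖u - ρ v‖²`, where `ρ` is the rotation by `π / 3`
  nlinarith [sq_nonneg (u 0 - v 0 / 2 - √3 / 2 * v 1), sq_nonneg (u 1 + √3 / 2 * v 0 - v 1 / 2),
    sq_sqrt (show (0 : ℝ) ≤ 3 by norm_num)]

lemma dist_sq_add_dist_sq_add_dist_sq_le {E : Type*} [NormedAddCommGroup E]
    [InnerProductSpace ℝ E] {x y w z : E} {R : ℝ} (hx : x ∈ closedBall z R)
    (hy : y ∈ closedBall z R) (hw : w ∈ closedBall z R) :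
    dist x y ^ 2 + dist y w ^ 2 + dist w x ^ 2 ≤ 9 * R ^ 2 := by
  have leibniz (a b c : E) : ‖a - b‖ ^ 2 + ‖b - c‖ ^ 2 + ‖c - a‖ ^ 2 + ‖a + b + c‖ ^ 2
      = 3 * (‖a‖ ^ 2 + ‖b‖ ^ 2 + ‖c‖ ^ 2) := by
    simp only [← real_inner_self_eq_norm_sq, inner_add_left, inner_add_right, inner_sub_left,
      inner_sub_right, real_inner_comm]
    ring
  have sq_le {p : E} (hp : p ∈ closedBall z R) : dist p z ^ 2 ≤ R ^ 2 :=
    pow_le_pow_left₀ dist_nonneg hp 2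
  have h := leibniz (x - z) (y - z) (w - z)
  simp only [sub_sub_sub_cancel_right, ← dist_eq_norm] at h
  nlinarith [sq_le hx, sq_le hy, sq_le hw, sq_nonneg ‖x - z + (y - z) + (w - z)‖]

lemma abs_cross_le_of_mem_closedBall {x y w z : ℝ²} {R : ℝ} (hx : x ∈ closedBall z R)
    (hy : y ∈ closedBall z R) (hw : w ∈ closedBall z R) :
    |cross (y - x) (w - x)| ≤ 3 * √3 / 2 * R ^ 2 := by
  have h₁ := sqrt_three_mul_cross_le (y - x) (w - x)
  have h₂ := sqrt_three_mul_cross_le (w - x) (y - x)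
  have hswap : cross (w - x) (y - x) = -cross (y - x) (w - x) := by
    unfold cross
    ring
  simp only [hswap, sub_sub_sub_cancel_right, ← dist_eq_norm, dist_comm y x, dist_comm w y]
    at h₁ h₂
  have hsum := dist_sq_add_dist_sq_add_dist_sq_le hx hy hw
  have h : √3 * |cross (y - x) (w - x)| ≤ 9 / 2 * R ^ 2 := by
    rcases abs_cases (cross (y - x) (w - x)) with ⟨habs, -⟩ | ⟨habs, -⟩ <;> rw [habs] <;>
      linarith
  have h' := mul_le_mul_of_nonneg_left h (sqrt_nonneg 3)
  rw [← mul_assoc, mul_self_sqrt (by norm_num)] at h'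
  linarith

lemma exists_equilateral_mem_sphere (z : ℝ²) {R : ℝ} (hR : 0 ≤ R) :
    ∃ x y w : ℝ², x ∈ sphere z R ∧ y ∈ sphere z R ∧ w ∈ sphere z R ∧
      dist x y = dist y w ∧ dist y w = dist w x ∧ cross (y - x) (w - x) = 3 * √3 / 2 * R ^ 2 := by
  have hd (p q : ℝ²) : dist p q ^ 2 = (p 0 - q 0) ^ 2 + (p 1 - q 1) ^ 2 := by
    simp [EuclideanSpace.dist_sq_eq, Fin.sum_univ_two, Real.dist_eq, sq_abs]
  have h3 : √3 ^ 2 = 3 := sq_sqrt (by norm_num)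
  have on_sphere {p : ℝ²} (hp : dist p z ^ 2 = R ^ 2) : p ∈ sphere z R :=
    (sq_eq_sq₀ dist_nonneg hR).1 hp
  have side {p q : ℝ²} (hpq : dist p q ^ 2 = 3 * R ^ 2) : dist p q = √3 * R := by
    rw [← sq_eq_sq₀ dist_nonneg (by positivity), hpq, mul_pow, h3]
  refine ⟨z + !₂[R, 0], z + !₂[-R / 2, √3 / 2 * R], z + !₂[-R / 2, -(√3 / 2 * R)],
    on_sphere ?_, on_sphere ?_, on_sphere ?_, ?_, ?_, ?_⟩
  all_goals try rw [side, side]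
  all_goals try rw [hd]
  all_goals simp only [cross, PiLp.add_apply, PiLp.sub_apply, Matrix.cons_val_zero,
    Matrix.cons_val_one, Matrix.cons_val_fin_one]
  all_goals ring_nf
  all_goals simp only [h3] <;> ring

/-- The maximal area of a triangle inscribed in a closed disk of radius `R` in the plane
is `(3√3/4)·R²`, attained by an equilateral triangle inscribed in the boundary circle. -/
theorem max_area_triangle_in_disk (R : ℝ) (hR : 0 < R)
    (z : EuclideanSpace ℝ (Fin 2)) :
    IsGreatest {a : ℝ | ∃ x y w : EuclideanSpace ℝ (Fin 2),
        x ∈ closedBall z R ∧ y ∈ closedBall z R ∧ w ∈ closedBall z R ∧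
        a = (volume (convexHull ℝ ({x, y, w} : Set (EuclideanSpace ℝ (Fin 2))))).toReal}
      (3 * Real.sqrt 3 / 4 * R ^ 2) ∧
    ∃ x y w : EuclideanSpace ℝ (Fin 2),
      x ∈ sphere z R ∧ y ∈ sphere z R ∧ w ∈ sphere z R ∧
      dist x y = dist y w ∧ dist y w = dist w x ∧
      (volume (convexHull ℝ ({x, y, w} : Set (EuclideanSpace ℝ (Fin 2))))).toReal
        = 3 * Real.sqrt 3 / 4 * R ^ 2 := by
  have area_eq (x y w : ℝ²) : (volume (convexHull ℝ {x, y, w})).toReal =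
      |cross (y - x) (w - x)| / 2 := by
    rw [volume_convexHull_triple, ENNReal.toReal_ofReal (by positivity)]
  obtain ⟨x, y, w, hx, hy, hw, hxy, hyw, hcross⟩ := exists_equilateral_mem_sphere z hR.le
  have harea : (volume (convexHull ℝ {x, y, w})).toReal = 3 * √3 / 4 * R ^ 2 := by
    rw [area_eq, hcross, abs_of_nonneg (by positivity)]
    ring
  refine ⟨⟨⟨x, y, w, sphere_subset_closedBall hx, sphere_subset_closedBall hy,
    sphere_subset_closedBall hw, harea.symm⟩, ?_⟩, ⟨x, y, w, hx, hy, hw, hxy, hyw, harea⟩⟩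
  rintro _ ⟨x, y, w, hx, hy, hw, rfl⟩
  rw [area_eq]
  linarith [abs_cross_le_of_mem_closedBall hx hy hw]
end

section
/- Let 2π/3 ≤ θ ≤ π, let B be the unit disk and H⁻ a closed half-plane whose boundary line cuts B in a chord subtending central angle θ at the center, with the center of B in H⁻. Then the maximal area of a triangle with vertices in B ∩ H⁻ is sin(θ/2) + (1/2)·sin θ, attained by an isosceles triangle inscribed in the circle with central angles π − θ/2, π − θ/2, θ. -/
open Real MeasureTheory Metric Set
open scoped RealInnerProductSpace Pointwise

/-!
In the orthonormal frame `(n, perp n)` the region becomes the circular segment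
`u² + v² ≤ 1, u ≤ cos β` with `β = θ / 2`, and twice the area of a triangle is the absolute value
of `doubleSignedArea`. That quantity is affine in the `v`-coordinate of each vertex, so the vertices
may be pushed to the arc, at angles `t₁ ≤ t₂ ≤ t₃` in `[β, 2π - β]`. With `a = t₂ - t₁ = σ + δ`
and `b = t₃ - t₂ = σ - δ`, twice the area is
`sin a + sin b - sin (a + b) = 2 sin σ (cos δ - cos σ) ≤ 2 (1 - cos σ) sin σ`, and
`(1 - cos σ) sin σ` increases on `[0, 2π/3]`, which contains `σ ≤ π - β`. Equality holds for
`δ = 0`, `σ = π - β`: the isosceles triangle with apex `-n`.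
-/

local notation "ℝ²" => EuclideanSpace ℝ (Fin 2)

theorem monotoneOn_one_sub_cos_mul_sin :
    MonotoneOn (fun x => (1 - cos x) * sin x) (Icc 0 (2 * π / 3)) := by
  have hderiv : ∀ x, HasDerivAt (fun x => (1 - cos x) * sin x)
      ((1 - cos x) * (1 + 2 * cos x)) x := fun x =>
    (((hasDerivAt_cos x).const_sub 1).mul (hasDerivAt_sin x)).congr_deriv
      (by linear_combination sin_sq_add_cos_sq x)
  refine monotoneOn_of_deriv_nonneg (convex_Icc _ _)
    (fun x _ => (hderiv x).continuousAt.continuousWithinAt)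
    (fun x _ => (hderiv x).differentiableAt.differentiableWithinAt) fun x hx => ?_
  rw [interior_Icc] at hx
  have : cos (2 * π / 3) ≤ cos x :=
    cos_le_cos_of_nonneg_of_le_pi hx.1.le (by linarith [pi_pos]) hx.2.le
  rw [show 2 * π / 3 = π - π / 3 by ring, cos_pi_sub, cos_pi_div_three] at this
  rw [(hderiv x).deriv]
  exact mul_nonneg (by linarith [cos_le_one x]) (by linarith)

theorem sin_add_add_sin_sub_sub_sin_two_mul (σ δ : ℝ) :
    sin (σ + δ) + sin (σ - δ) - sin (2 * σ) = 2 * sin σ * (cos δ - cos σ) := by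
  rw [sin_add, sin_sub, sin_two_mul]; ring

theorem sin_add_sin_sub_sin_add_mem_Icc {α a b : ℝ} (ha : 0 ≤ a) (hb : 0 ≤ b)
    (hab : a + b ≤ 2 * α) (hα : α ≤ 2 * π / 3) :
    sin a + sin b - sin (a + b) ∈ Icc 0 (2 * ((1 - cos α) * sin α)) := by
  obtain ⟨σ, δ, rfl, rfl⟩ : ∃ σ δ, a = σ + δ ∧ b = σ - δ :=
    ⟨(a + b) / 2, (a - b) / 2, by ring, by ring⟩
  have hσ : 0 ≤ σ := by linarith
  have hσα : σ ≤ α := by linarith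
  have hsin : 0 ≤ sin σ := sin_nonneg_of_nonneg_of_le_pi hσ (by linarith [pi_pos])
  have hcos : cos σ ≤ cos δ := by
    rw [← cos_abs δ]
    exact cos_le_cos_of_nonneg_of_le_pi (abs_nonneg δ) (by linarith [pi_pos])
      (abs_le.2 ⟨by linarith, by linarith⟩)
  have hmono : (1 - cos σ) * sin σ ≤ (1 - cos α) * sin α :=
    monotoneOn_one_sub_cos_mul_sin ⟨hσ, hσα.trans hα⟩ ⟨hσ.trans hσα, hα⟩ hσα
  rw [show σ + δ + (σ - δ) = 2 * σ by ring, sin_add_add_sin_sub_sub_sin_two_mul]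
  constructor
  · nlinarith
  · nlinarith [cos_le_one δ]

theorem exists_mem_Icc_cos_sin_eq {β : ℝ} (hβ₀ : 0 ≤ β) (hβ : β ≤ π) {p : ℝ × ℝ}
    (hp : p.1 ^ 2 + p.2 ^ 2 = 1) (hp' : p.1 ≤ cos β) :
    ∃ t ∈ Icc β (2 * π - β), (cos t, sin t) = p := by
  obtain ⟨u, v⟩ := p
  dsimp only at hp hp'
  have hu₁ : -1 ≤ u := by nlinarith
  have hu₂ : u ≤ 1 := by nlinarith
  have hβt : β ≤ arccos u := by
    rw [← arccos_cos hβ₀ hβ]; exact arccos_le_arccos hp'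
  have hsin : sin (arccos u) = |v| := by
    rw [sin_arccos, show 1 - u ^ 2 = v ^ 2 by linarith, sqrt_sq_eq_abs]
  rcases le_total 0 v with hv | hv
  · refine ⟨arccos u, ⟨hβt, by linarith [arccos_le_pi u]⟩, ?_⟩
    rw [cos_arccos hu₁ hu₂, hsin, abs_of_nonneg hv]
  · refine ⟨2 * π - arccos u, ⟨by linarith [arccos_le_pi u], by linarith⟩, ?_⟩
    rw [cos_two_pi_sub, sin_two_pi_sub, cos_arccos hu₁ hu₂, hsin, abs_of_nonpos hv, neg_neg]

def doubleSignedArea (p q r : ℝ × ℝ) : ℝ :=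
  (q.1 - p.1) * (r.2 - p.2) - (r.1 - p.1) * (q.2 - p.2)

theorem doubleSignedArea_rotate (p q r : ℝ × ℝ) :
    doubleSignedArea q r p = doubleSignedArea p q r := by
  unfold doubleSignedArea; ring

theorem doubleSignedArea_swap (p q r : ℝ × ℝ) :
    doubleSignedArea q p r = -doubleSignedArea p q r := by
  unfold doubleSignedArea; ring

theorem doubleSignedArea_swap_right (p q r : ℝ × ℝ) :
    doubleSignedArea p r q = -doubleSignedArea p q r := by
  unfold doubleSignedArea; ring

theorem doubleSignedArea_cos_sin (t₁ t₂ t₃ : ℝ) :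
    doubleSignedArea (cos t₁, sin t₁) (cos t₂, sin t₂) (cos t₃, sin t₃) =
      sin (t₂ - t₁) + sin (t₃ - t₂) - sin (t₂ - t₁ + (t₃ - t₂)) := by
  rw [show t₂ - t₁ + (t₃ - t₂) = t₃ - t₁ by ring]
  simp only [doubleSignedArea, sin_sub]; ring

theorem abs_doubleSignedArea_cos_sin_le {a α t₁ t₂ t₃ : ℝ} (hα : α ≤ 2 * π / 3)
    (h₁ : t₁ ∈ Icc a (a + 2 * α)) (h₂ : t₂ ∈ Icc a (a + 2 * α)) (h₃ : t₃ ∈ Icc a (a + 2 * α)) :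
    |doubleSignedArea (cos t₁, sin t₁) (cos t₂, sin t₂) (cos t₃, sin t₃)| ≤
      2 * ((1 - cos α) * sin α) := by
  wlog h₁₂ : t₁ ≤ t₂ generalizing t₁ t₂ t₃
  · rw [← abs_neg, ← doubleSignedArea_swap]
    exact this h₂ h₁ h₃ (le_of_not_ge h₁₂)
  wlog h₂₃ : t₂ ≤ t₃ generalizing t₁ t₂ t₃
  · rcases le_total t₁ t₃ with h₁₃ | h₃₁
    · rw [← abs_neg, ← doubleSignedArea_swap_right]
      exact this h₁ h₃ h₂ h₁₃ (le_of_not_ge h₂₃)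
    · rw [doubleSignedArea_rotate]
      exact this h₃ h₁ h₂ h₃₁ h₁₂
  have hsorted := sin_add_sin_sub_sin_add_mem_Icc (sub_nonneg.2 h₁₂) (sub_nonneg.2 h₂₃)
    (by linarith [h₁.1, h₃.2]) hα
  rw [doubleSignedArea_cos_sin, abs_of_nonneg hsorted.1]
  exact hsorted.2

theorem abs_doubleSignedArea_le_of_sq_add_sq_eq_one {β : ℝ} (hβ₀ : π / 3 ≤ β) (hβ : β ≤ π)
    {p q r : ℝ × ℝ} (hp : p.1 ^ 2 + p.2 ^ 2 = 1 ∧ p.1 ≤ cos β)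
    (hq : q.1 ^ 2 + q.2 ^ 2 = 1 ∧ q.1 ≤ cos β) (hr : r.1 ^ 2 + r.2 ^ 2 = 1 ∧ r.1 ≤ cos β) :
    |doubleSignedArea p q r| ≤ 2 * (sin β * (1 + cos β)) := by
  have hβ₀' : 0 ≤ β := by linarith [pi_pos]
  obtain ⟨t₁, ht₁, rfl⟩ := exists_mem_Icc_cos_sin_eq hβ₀' hβ hp.1 hp.2
  obtain ⟨t₂, ht₂, rfl⟩ := exists_mem_Icc_cos_sin_eq hβ₀' hβ hq.1 hq.2
  obtain ⟨t₃, ht₃, rfl⟩ := exists_mem_Icc_cos_sin_eq hβ₀' hβ hr.1 hr.2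
  have hIcc : Icc β (2 * π - β) = Icc β (β + 2 * (π - β)) := by ring_nf
  rw [hIcc] at ht₁ ht₂ ht₃
  exact (abs_doubleSignedArea_cos_sin_le (by linarith) ht₁ ht₂ ht₃).trans_eq
    (by rw [cos_pi_sub, sin_pi_sub]; ring)

theorem abs_add_mul_le_of_abs_le {A B r v M : ℝ} (hv : |v| ≤ r) (hr : |A + B * r| ≤ M)
    (hnr : |A + B * -r| ≤ M) : |A + B * v| ≤ M := by
  rw [abs_le] at *
  rcases le_total 0 B with hB | hB
  · constructor <;> nlinarith
  · constructor <;> nlinarith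

/-- The signed area is affine in `p.2`, so on the vertical chord through `p` it is extremal at
the chord's endpoints on the unit circle. -/
theorem abs_doubleSignedArea_le_of_forall_sq_add_sq_eq_one {M : ℝ} {p q r : ℝ × ℝ}
    (hp : p.1 ^ 2 + p.2 ^ 2 ≤ 1)
    (h : ∀ v, p.1 ^ 2 + v ^ 2 = 1 → |doubleSignedArea (p.1, v) q r| ≤ M) :
    |doubleSignedArea p q r| ≤ M := by
  have hD : ∀ v, doubleSignedArea (p.1, v) q r =
      ((q.1 - p.1) * r.2 - (r.1 - p.1) * q.2) + (r.1 - q.1) * v := fun v => by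
    unfold doubleSignedArea; ring
  have hchord : 0 ≤ 1 - p.1 ^ 2 := by nlinarith
  have hupper := h (√(1 - p.1 ^ 2)) (by rw [sq_sqrt hchord]; ring)
  have hlower := h (-√(1 - p.1 ^ 2)) (by rw [neg_sq, sq_sqrt hchord]; ring)
  rw [hD] at hupper hlower
  rw [show doubleSignedArea p q r = _ from hD p.2]
  exact abs_add_mul_le_of_abs_le (abs_le_sqrt (by linarith)) hupper hlower

def circularSegment (β : ℝ) : Set (ℝ × ℝ) := {p | p.1 ^ 2 + p.2 ^ 2 ≤ 1 ∧ p.1 ≤ cos β}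

theorem abs_doubleSignedArea_le_of_mem_circularSegment {β : ℝ} (hβ₀ : π / 3 ≤ β) (hβ : β ≤ π)
    {p q r : ℝ × ℝ} (hp : p ∈ circularSegment β) (hq : q ∈ circularSegment β)
    (hr : r ∈ circularSegment β) :
    |doubleSignedArea p q r| ≤ 2 * (sin β * (1 + cos β)) := by
  refine abs_doubleSignedArea_le_of_forall_sq_add_sq_eq_one hp.1 fun u hu => ?_
  rw [← doubleSignedArea_rotate]
  refine abs_doubleSignedArea_le_of_forall_sq_add_sq_eq_one hq.1 fun v hv => ?_
  rw [← doubleSignedArea_rotate]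
  refine abs_doubleSignedArea_le_of_forall_sq_add_sq_eq_one hr.1 fun w hw => ?_
  rw [← doubleSignedArea_rotate]
  exact abs_doubleSignedArea_le_of_sq_add_sq_eq_one hβ₀ hβ ⟨hu, hp.2⟩ ⟨hv, hq.2⟩ ⟨hw, hr.2⟩

theorem measurableSet_stdTriangle :
    MeasurableSet {q : ℝ × ℝ | 0 ≤ q.1 ∧ 0 ≤ q.2 ∧ q.1 + q.2 ≤ 1} := by
  measurability

theorem volume_stdTriangle_s4 :
    volume {q : ℝ × ℝ | 0 ≤ q.1 ∧ 0 ≤ q.2 ∧ q.1 + q.2 ≤ 1} = ENNReal.ofReal (1 / 2) := by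
  have hslice : ∀ x, volume (Prod.mk x ⁻¹' {q : ℝ × ℝ | 0 ≤ q.1 ∧ 0 ≤ q.2 ∧ q.1 + q.2 ≤ 1}) =
      (Icc 0 1).indicator (fun x => ENNReal.ofReal (1 - x)) x := by
    intro x
    by_cases hx : x ∈ Icc (0 : ℝ) 1
    · rw [indicator_of_mem hx, ← sub_zero (1 - x), ← Real.volume_Icc]
      congr 1; ext y
      simp only [mem_preimage, mem_ofPred_eq, mem_Icc]
      constructor
      · rintro ⟨-, hy, hxy⟩; exact ⟨hy, by linarith⟩
      · rintro ⟨hy, hxy⟩; exact ⟨hx.1, hy, by linarith⟩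
    · rw [indicator_of_notMem hx, measure_eq_zero_iff_ae_notMem]
      refine ae_of_all _ fun y ⟨h0, hy, hxy⟩ => hx ⟨h0, by linarith⟩
  rw [Measure.volume_eq_prod, Measure.prod_apply measurableSet_stdTriangle, funext hslice,
    lintegral_indicator measurableSet_Icc, ← ofReal_integral_eq_lintegral_ofReal]
  · rw [integral_Icc_eq_integral_Ioc, ← intervalIntegral.integral_of_le zero_le_one,
      intervalIntegral.integral_sub intervalIntegrable_const intervalIntegral.intervalIntegrable_id,
      integral_id]
    norm_num
  · exact (continuous_const.sub continuous_id).integrableOn_Icc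
  · exact (ae_restrict_iff' measurableSet_Icc).2 (ae_of_all _ fun x hx => sub_nonneg.2 hx.2)

theorem convexHull_zero_single_single_s4 :
    convexHull ℝ {0, EuclideanSpace.single 0 1, EuclideanSpace.single 1 1} =
      {p : ℝ² | 0 ≤ p 0 ∧ 0 ≤ p 1 ∧ p 0 + p 1 ≤ 1} := by
  apply Subset.antisymm
  · refine convexHull_min ?_ fun a ⟨ha₀, ha₁, ha⟩ b ⟨hb₀, hb₁, hb⟩ s t hs ht hst => ?_
    · rintro p (rfl | rfl | rfl) <;> simp
    · simp only [mem_ofPred_eq, PiLp.add_apply, PiLp.smul_apply, smul_eq_mul]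
      refine ⟨by positivity, by positivity, by nlinarith⟩
  · rintro p ⟨h₀, h₁, h⟩
    have hp : p = ∑ i, ![1 - p 0 - p 1, p 0, p 1] i •
        ![0, EuclideanSpace.single 0 1, EuclideanSpace.single 1 1] i := by
      ext i; fin_cases i <;> simp [Fin.sum_univ_three]
    rw [hp]
    refine (convex_convexHull ℝ _).sum_mem (fun i _ => ?_) ?_
      fun i _ => subset_convexHull ℝ _ (by fin_cases i <;> simp)
    · fin_cases i <;> simp <;> linarith
    · simp [Fin.sum_univ_three]; ring

theorem volume_convexHull_zero_single_single :
    volume (convexHull ℝ {0, EuclideanSpace.single 0 1, EuclideanSpace.single 1 1} : Set ℝ²) =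
      ENNReal.ofReal (1 / 2) := by
  have hpres := (EuclideanSpace.volume_preserving_symm_measurableEquiv_toLp (Fin 2)).trans
    (volume_preserving_finTwoArrow ℝ)
  rw [convexHull_zero_single_single_s4, ← volume_stdTriangle_s4]
  exact hpres.measure_preimage measurableSet_stdTriangle.nullMeasurableSet

theorem volume_convexHull_triangle (x y w : ℝ²) :
    volume (convexHull ℝ {x, y, w}) =
      ENNReal.ofReal (|doubleSignedArea (x 0, x 1) (y 0, y 1) (w 0, w 1)| / 2) := by
  set b := (EuclideanSpace.basisFun (Fin 2) ℝ).toBasis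
  set L := Matrix.toLin b b !![y 0 - x 0, w 0 - x 0; y 1 - x 1, w 1 - x 1]
  have hL : ∀ i, L (EuclideanSpace.single i 1) = ![y - x, w - x] i := by
    intro i
    rw [← EuclideanSpace.basisFun_apply, ← OrthonormalBasis.coe_toBasis, Matrix.toLin_self]
    ext j; fin_cases i <;> fin_cases j <;> simp [b]
  have hhull : convexHull ℝ {x, y, w} =
      x +ᵥ L '' convexHull ℝ {0, EuclideanSpace.single 0 1, EuclideanSpace.single 1 1} := by
    rw [LinearMap.image_convexHull, ← convexHull_vadd]
    simp [image_insert_eq, vadd_set_insert, hL]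
  rw [hhull, measure_vadd, Measure.addHaar_image_linearMap, LinearMap.det_toLin,
    volume_convexHull_zero_single_single, ← ENNReal.ofReal_mul (abs_nonneg _),
    Matrix.det_fin_two_of]
  congr 1
  simp only [doubleSignedArea]
  ring

def perp (n : ℝ²) : ℝ² := !₂[-n 1, n 0]

noncomputable def frameCoords (n p : ℝ²) : ℝ × ℝ := (⟪n, p⟫, ⟪perp n, p⟫)

theorem inner_eq_fin_two (p q : ℝ²) : ⟪p, q⟫ = p 0 * q 0 + p 1 * q 1 := by
  simp [PiLp.inner_apply, Fin.sum_univ_two, mul_comm]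

theorem norm_sq_eq_fin_two (p : ℝ²) : ‖p‖ ^ 2 = p 0 ^ 2 + p 1 ^ 2 := by
  simp [EuclideanSpace.norm_sq_eq, Fin.sum_univ_two]

theorem fin_two_sq_add_sq_of_norm_eq_one {n : ℝ²} (hn : ‖n‖ = 1) : n 0 ^ 2 + n 1 ^ 2 = 1 := by
  rw [← norm_sq_eq_fin_two, hn, one_pow]

theorem frameCoords_apply (n p : ℝ²) :
    frameCoords n p = (n 0 * p 0 + n 1 * p 1, n 0 * p 1 - n 1 * p 0) := by
  simp [frameCoords, perp, inner_eq_fin_two]; ring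

theorem frameCoords_fst_sq_add_snd_sq {n : ℝ²} (hn : ‖n‖ = 1) (p : ℝ²) :
    (frameCoords n p).1 ^ 2 + (frameCoords n p).2 ^ 2 = ‖p‖ ^ 2 := by
  have hn' := fin_two_sq_add_sq_of_norm_eq_one hn
  rw [frameCoords_apply, norm_sq_eq_fin_two]
  linear_combination (p 0 ^ 2 + p 1 ^ 2) * hn'

theorem doubleSignedArea_frameCoords {n : ℝ²} (hn : ‖n‖ = 1) (x y w : ℝ²) :
    doubleSignedArea (frameCoords n x) (frameCoords n y) (frameCoords n w) =
      doubleSignedArea (x 0, x 1) (y 0, y 1) (w 0, w 1) := by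
  have hn' := fin_two_sq_add_sq_of_norm_eq_one hn
  simp only [frameCoords_apply, doubleSignedArea]
  linear_combination ((y 0 - x 0) * (w 1 - x 1) - (w 0 - x 0) * (y 1 - x 1)) * hn'

theorem frameCoords_smul_add_smul_perp {n : ℝ²} (hn : ‖n‖ = 1) (a b : ℝ) :
    frameCoords n (a • n + b • perp n) = (a, b) := by
  have hn' := fin_two_sq_add_sq_of_norm_eq_one hn
  rw [frameCoords_apply]
  simp only [perp, PiLp.add_apply, PiLp.smul_apply, smul_eq_mul, Matrix.cons_val_zero,
    Matrix.cons_val_one, Matrix.cons_val_fin_one, Prod.mk.injEq]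
  exact ⟨by linear_combination a * hn', by linear_combination b * hn'⟩

theorem volume_convexHull_triangle_eq_frameCoords {n : ℝ²} (hn : ‖n‖ = 1) (x y w : ℝ²) :
    volume (convexHull ℝ {x, y, w}) = ENNReal.ofReal
      (|doubleSignedArea (frameCoords n x) (frameCoords n y) (frameCoords n w)| / 2) := by
  rw [volume_convexHull_triangle, doubleSignedArea_frameCoords hn]

theorem frameCoords_mem_circularSegment {n : ℝ²} (hn : ‖n‖ = 1) {β : ℝ} {p : ℝ²}
    (hp : p ∈ closedBall 0 1 ∩ {p | ⟪n, p⟫ ≤ cos β}) : frameCoords n p ∈ circularSegment β := by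
  refine ⟨?_, hp.2⟩
  rw [frameCoords_fst_sq_add_snd_sq hn]
  exact pow_le_one₀ (norm_nonneg p) (mem_closedBall_zero_iff.1 hp.1)

theorem smul_add_smul_perp_mem_sphere_inter {n : ℝ²} (hn : ‖n‖ = 1) {β a b : ℝ}
    (hab : a ^ 2 + b ^ 2 = 1) (ha : a ≤ cos β) :
    a • n + b • perp n ∈ sphere 0 1 ∩ {p | ⟪n, p⟫ ≤ cos β} := by
  have hframe := frameCoords_smul_add_smul_perp hn a b
  refine ⟨?_, (congrArg Prod.fst hframe).trans_le ha⟩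
  rw [mem_sphere_zero_iff_norm, ← pow_eq_one_iff_of_nonneg (norm_nonneg _) two_ne_zero,
    ← frameCoords_fst_sq_add_snd_sq hn, hframe, hab]

theorem dist_smul_add_smul_perp {n : ℝ²} (hn : ‖n‖ = 1) (a b a' b' : ℝ) :
    dist (a • n + b • perp n) (a' • n + b' • perp n) = √((a - a') ^ 2 + (b - b') ^ 2) := by
  rw [dist_eq_norm, show a • n + b • perp n - (a' • n + b' • perp n) =
      (a - a') • n + (b - b') • perp n by module, ← sqrt_sq (norm_nonneg _),
    ← frameCoords_fst_sq_add_snd_sq hn, frameCoords_smul_add_smul_perp hn]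

theorem toReal_volume_convexHull_isosceles {n : ℝ²} (hn : ‖n‖ = 1) {c s : ℝ} (hs : 0 ≤ s)
    (hc : -1 ≤ c) :
    (volume (convexHull ℝ
      {(-1 : ℝ) • n + (0 : ℝ) • perp n, c • n + s • perp n, c • n + (-s) • perp n})).toReal =
      s * (1 + c) := by
  have harea : 0 ≤ s * (1 + c) := mul_nonneg hs (by linarith)
  rw [volume_convexHull_triangle_eq_frameCoords hn]
  simp only [frameCoords_smul_add_smul_perp hn, doubleSignedArea]
  rw [show (c - -1) * (-s - 0) - (c - -1) * (s - 0) = -(2 * (s * (1 + c))) by ring, abs_neg,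
    abs_of_nonneg (by linarith), ENNReal.toReal_ofReal (by linarith)]
  ring

theorem toReal_volume_convexHull_le_of_mem_cap {β : ℝ} (hβ₀ : π / 3 ≤ β) (hβ : β ≤ π) {n : ℝ²}
    (hn : ‖n‖ = 1) {x y w : ℝ²} (hx : x ∈ closedBall 0 1 ∩ {p | ⟪n, p⟫ ≤ cos β})
    (hy : y ∈ closedBall 0 1 ∩ {p | ⟪n, p⟫ ≤ cos β})
    (hw : w ∈ closedBall 0 1 ∩ {p | ⟪n, p⟫ ≤ cos β}) :
    (volume (convexHull ℝ {x, y, w})).toReal ≤ sin β * (1 + cos β) := by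
  rw [volume_convexHull_triangle_eq_frameCoords hn, ENNReal.toReal_ofReal (by positivity)]
  have := abs_doubleSignedArea_le_of_mem_circularSegment hβ₀ hβ
    (frameCoords_mem_circularSegment hn hx) (frameCoords_mem_circularSegment hn hy)
    (frameCoords_mem_circularSegment hn hw)
  linarith

/-- The maximal area of a triangle with vertices in the larger circular segment of the
unit disk cut off by a chord subtending central angle `θ ∈ [2π/3, π]`
is `sin(θ/2) + (1/2)·sin θ`, attained by an isosceles triangle inscribed in the circle. -/
theorem max_area_triangle_in_cap (θ : ℝ) (hθ : θ ∈ Set.Icc (2 * π / 3) π)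
    (n : EuclideanSpace ℝ (Fin 2)) (hn : ‖n‖ = 1) :
    IsGreatest {a : ℝ | ∃ x y w : EuclideanSpace ℝ (Fin 2),
        x ∈ closedBall (0 : EuclideanSpace ℝ (Fin 2)) 1 ∩ {p | ⟪n, p⟫ ≤ Real.cos (θ / 2)} ∧
        y ∈ closedBall (0 : EuclideanSpace ℝ (Fin 2)) 1 ∩ {p | ⟪n, p⟫ ≤ Real.cos (θ / 2)} ∧
        w ∈ closedBall (0 : EuclideanSpace ℝ (Fin 2)) 1 ∩ {p | ⟪n, p⟫ ≤ Real.cos (θ / 2)} ∧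
        a = (volume (convexHull ℝ ({x, y, w} : Set (EuclideanSpace ℝ (Fin 2))))).toReal}
      (Real.sin (θ / 2) + 1 / 2 * Real.sin θ) ∧
    ∃ x y w : EuclideanSpace ℝ (Fin 2),
      x ∈ sphere (0 : EuclideanSpace ℝ (Fin 2)) 1 ∩ {p | ⟪n, p⟫ ≤ Real.cos (θ / 2)} ∧
      y ∈ sphere (0 : EuclideanSpace ℝ (Fin 2)) 1 ∩ {p | ⟪n, p⟫ ≤ Real.cos (θ / 2)} ∧
      w ∈ sphere (0 : EuclideanSpace ℝ (Fin 2)) 1 ∩ {p | ⟪n, p⟫ ≤ Real.cos (θ / 2)} ∧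
      dist x y = dist x w ∧
      (volume (convexHull ℝ ({x, y, w} : Set (EuclideanSpace ℝ (Fin 2))))).toReal
        = Real.sin (θ / 2) + 1 / 2 * Real.sin θ := by
  obtain ⟨hθ₁, hθ₂⟩ := hθ
  have hβ₁ : π / 3 ≤ θ / 2 := by linarith
  have hβ₂ : θ / 2 ≤ π := by linarith [pi_pos]
  have hsin : 0 ≤ sin (θ / 2) := sin_nonneg_of_nonneg_of_le_pi (by linarith [pi_pos]) hβ₂
  rw [show sin θ = 2 * sin (θ / 2) * cos (θ / 2) by rw [← sin_two_mul]; ring_nf,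
    show sin (θ / 2) + 1 / 2 * (2 * sin (θ / 2) * cos (θ / 2)) =
      sin (θ / 2) * (1 + cos (θ / 2)) by ring]
  set c := cos (θ / 2)
  set s := sin (θ / 2)
  have hsc : s ^ 2 + c ^ 2 = 1 := sin_sq_add_cos_sq _
  have hx := smul_add_smul_perp_mem_sphere_inter hn (a := -1) (b := 0) (by ring)
    (by linarith [neg_one_le_cos (θ / 2)])
  have hy := smul_add_smul_perp_mem_sphere_inter hn (a := c) (b := s) (by linarith) le_rfl
  have hw := smul_add_smul_perp_mem_sphere_inter hn (a := c) (b := -s) (by linarith) le_rfl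
  have hvol := toReal_volume_convexHull_isosceles hn hsin (neg_one_le_cos (θ / 2))
  have hball : sphere (0 : ℝ²) 1 ∩ {p | ⟪n, p⟫ ≤ c} ⊆ closedBall 0 1 ∩ {p | ⟪n, p⟫ ≤ c} :=
    inter_subset_inter_left _ sphere_subset_closedBall
  refine ⟨⟨⟨_, _, _, hball hx, hball hy, hball hw, hvol.symm⟩, ?_⟩,
    ⟨_, _, _, hx, hy, hw, ?_, hvol⟩⟩
  · rintro _ ⟨x, y, w, hx, hy, hw, rfl⟩
    exact toReal_volume_convexHull_le_of_mem_cap hβ₁ hβ₂ hn hx hy hw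
  · rw [dist_smul_add_smul_perp hn, dist_smul_add_smul_perp hn]
    congr 1
    ring
end

section
/- Let ψ : [0,∞) → (0,1] be a non-increasing function with ψ(0)=1 satisfying ψ(τ/k) = ψ(τ)^{1/k} for all τ ≥ 0 and all integers k ≥ 1 of the form k = m^d for a fixed d ≥ 1 and all m ∈ ℕ*. If additionally ψ(τ) ≥ e^{−τ} for all τ, then there exists θ ∈ [0,1] such that ψ(τ) = e^{−θτ} for all τ ≥ 0. -/
/-!
With `L = log ∘ ψ` the functional equation becomes `L (τ / m^d) = L τ / m^d`, which forces
`L (q^d) = q^d · L 1` at every positive rational `q`. The `d`-th powers of positive rationals are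
dense in `(0, ∞)`, and an antitone function that agrees with a continuous one on a dense set
agrees with it everywhere, so `ψ τ = exp (-θ τ)` with `θ = -log ψ(1)`; the bounds
`e⁻¹ ≤ ψ 1 ≤ 1` give `0 ≤ θ ≤ 1`.
-/

open Real Set

theorem AntitoneOn.eqOn_of_eqOn_dense {g h : ℝ → ℝ} {a : ℝ} {D : Set ℝ}
    (hg : AntitoneOn g (Ioi a)) (hh : Continuous h) (hD : Dense D)
    (hgh : EqOn g h (D ∩ Ioi a)) : EqOn g h (Ioi a) := by
  intro x hx
  have Icc_subset_closure {u v : ℝ} (huv : u < v) : Icc u v ⊆ closure (Ioo u v ∩ D) := by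
    rw [← closure_Ioo huv.ne]
    exact closure_minimal (hD.open_subset_closure_inter isOpen_Ioo) isClosed_closure
  apply le_antisymm
  · have hsub : Ioo a x ∩ D ⊆ {y | g x ≤ h y} := fun y ⟨⟨hay, hyx⟩, hyD⟩ =>
      (hg hay hx hyx.le).trans_eq (hgh ⟨hyD, hay⟩)
    exact (isClosed_le continuous_const hh).closure_subset_iff.mpr hsub
      (Icc_subset_closure hx ⟨hx.le, le_rfl⟩)
  · have hsub : Ioo x (x + 1) ∩ D ⊆ {y | h y ≤ g x} := fun y ⟨⟨hxy, _⟩, hyD⟩ =>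
      (hgh ⟨hyD, hx.trans hxy⟩).symm.trans_le (hg hx (hx.trans hxy) hxy.le)
    exact (isClosed_le hh continuous_const).closure_subset_iff.mpr hsub
      (Icc_subset_closure (lt_add_one x) ⟨le_rfl, by linarith⟩)

theorem apply_rat_pow_eq_mul {φ : ℝ → ℝ} {d : ℕ}
    (hφ : ∀ τ : ℝ, 0 ≤ τ → ∀ m : ℕ, 1 ≤ m →
      φ (τ / ((m ^ d : ℕ) : ℝ)) = φ τ / ((m ^ d : ℕ) : ℝ))
    {q : ℚ} (hq : 0 < q) : φ ((q : ℝ) ^ d) = φ 1 * (q : ℝ) ^ d := by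
  have apply_natCast_pow {m : ℕ} (hm : 1 ≤ m) : φ ((m : ℝ) ^ d) = φ 1 * (m : ℝ) ^ d := by
    have hmd : (m : ℝ) ^ d ≠ 0 := pow_ne_zero _ (by positivity)
    have h := hφ ((m : ℝ) ^ d) (by positivity) m hm
    push_cast at h
    rw [div_self hmd] at h
    rw [h, div_mul_cancel₀ _ hmd]
  set a := q.num.natAbs
  have ha : 1 ≤ a := Int.natAbs_pos.mpr (Rat.num_pos.mpr hq).ne'
  have hqab : (q : ℝ) = a / q.den := by
    rw [Nat.cast_natAbs, abs_of_pos (Rat.num_pos.mpr hq), ← Rat.cast_intCast, ← Rat.cast_natCast,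
      ← Rat.cast_div, Rat.num_div_den]
  have h := hφ ((a : ℝ) ^ d) (by positivity) q.den q.pos
  push_cast at h
  rw [hqab, div_pow, h, apply_natCast_pow ha, mul_div_assoc]

theorem eqOn_mul_of_antitoneOn_of_rat_pow {φ : ℝ → ℝ} {d : ℕ} (hd : d ≠ 0) {c : ℝ}
    (hφ : AntitoneOn φ (Ici 0))
    (hrat : ∀ q : ℚ, 0 < q → φ ((q : ℝ) ^ d) = c * (q : ℝ) ^ d) :
    EqOn φ (fun x => c * x) (Ioi 0) := by
  have hpow_anti : AntitoneOn (fun s : ℝ => φ (s ^ d)) (Ioi 0) :=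
    hφ.comp_MonotoneOn (pow_left_monotoneOn.mono Ioi_subset_Ici_self)
      fun s hs => mem_Ici.mpr (pow_nonneg (le_of_lt hs) d)
  have hpow : EqOn (fun s : ℝ => φ (s ^ d)) (fun s => c * s ^ d) (Ioi 0) :=
    hpow_anti.eqOn_of_eqOn_dense (by fun_prop) Rat.denseRange_cast
      fun _ ⟨⟨q, hq⟩, hpos⟩ => hq ▸ hrat q (Rat.cast_pos.mp (hq ▸ mem_Ioi.mp hpos))
  intro x hx
  have hroot := rpow_inv_natCast_pow (le_of_lt hx) hd
  simpa only [hroot] using hpow (rpow_pos_of_pos hx (d : ℝ)⁻¹)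

/-- The only positive non-increasing solutions of the extremal-index functional equation
bounded below by `e^{−τ}` are the exponentials `e^{−θτ}` with `θ ∈ [0,1]`. -/
theorem extremal_index_functional_equation (d : ℕ) (hd : 1 ≤ d) (ψ : ℝ → ℝ)
    (hpos : ∀ τ : ℝ, 0 ≤ τ → 0 < ψ τ ∧ ψ τ ≤ 1)
    (h0 : ψ 0 = 1)
    (hmono : AntitoneOn ψ (Set.Ici 0))
    (hfe : ∀ τ : ℝ, 0 ≤ τ → ∀ m : ℕ, 1 ≤ m →
      ψ (τ / ((m ^ d : ℕ) : ℝ)) = ψ τ ^ ((1 : ℝ) / ((m ^ d : ℕ) : ℝ)))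
    (hlb : ∀ τ : ℝ, 0 ≤ τ → Real.exp (-τ) ≤ ψ τ) :
    ∃ θ : ℝ, 0 ≤ θ ∧ θ ≤ 1 ∧ ∀ τ : ℝ, 0 ≤ τ → ψ τ = Real.exp (-θ * τ) := by
  set L : ℝ → ℝ := fun τ => log (ψ τ) with hL
  have hL_fe : ∀ τ : ℝ, 0 ≤ τ → ∀ m : ℕ, 1 ≤ m →
      L (τ / ((m ^ d : ℕ) : ℝ)) = L τ / ((m ^ d : ℕ) : ℝ) := by
    intro τ hτ m hm
    simp only [hL, hfe τ hτ m hm, log_rpow (hpos τ hτ).1]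
    ring
  have hL_anti : AntitoneOn L (Ici 0) :=
    strictMonoOn_log.monotoneOn.comp_AntitoneOn hmono fun τ hτ => (hpos τ hτ).1
  have hL_linear : ∀ τ : ℝ, 0 ≤ τ → L τ = L 1 * τ := by
    intro τ hτ
    rcases hτ.eq_or_lt with rfl | hτ
    · simp [hL, h0]
    · exact eqOn_mul_of_antitoneOn_of_rat_pow (by omega) hL_anti
        (fun q hq => apply_rat_pow_eq_mul hL_fe hq) hτ
  obtain ⟨hψ1_pos, hψ1_le⟩ := hpos 1 zero_le_one
  refine ⟨-L 1, neg_nonneg.mpr (log_nonpos hψ1_pos.le hψ1_le),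
    neg_le.mpr ((le_log_iff_exp_le hψ1_pos).mpr (hlb 1 zero_le_one)), fun τ hτ => ?_⟩
  rw [neg_neg, ← hL_linear τ hτ, exp_log (hpos τ hτ).1]
end

section
/- Let χ ⊂ ℝ² (more generally ℝ^d) be locally finite and let y ≠ 0 be such that χ ∪ {0, y} is in general position and every Voronoi cell of χ ∪ {0,y} is bounded. Suppose all Voronoi neighbors of 0 (with respect to χ ∪ {0,y}) lie in B(0, v) and all Voronoi neighbors of y lie in B(y, v). Then χ ∩ (B(0,v) ∪ B(y,v)) contains at least d + 1 points. -/
/-!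
If the Voronoi cell of `x` is bounded, then `x` lies in the convex hull of its neighbours:
otherwise some direction `u` has `⟪x' - x, u⟫ < 0` for every neighbour `x'`; the ray `x + t • u`
leaves the bounded cell at a point lying in the cell of some other nucleus `x'`, necessarily a
neighbour, yet along the ray `x` is strictly closer than such an `x'`.

With `A = χ₀ \ {0, y}` this gives `0 ∈ conv (A ∪ {y})` and `y ∈ conv (A ∪ {0})`; eliminating `y`
yields `0 ∈ conv A`, so `A ∪ {0}` is affinely dependent and general position forces it to have more
than `d + 1` points.
-/

open Metric

def voronoiCell {d : ℕ} (η : Set (EuclideanSpace ℝ (Fin d)))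
    (x : EuclideanSpace ℝ (Fin d)) : Set (EuclideanSpace ℝ (Fin d)) :=
  {z | ∀ x' ∈ η, dist z x ≤ dist z x'}

open Set Bornology

section

variable {E : Type*}

theorem dist_add_smul_lt_dist_of_inner_neg [NormedAddCommGroup E] [InnerProductSpace ℝ E]
    {x x' u : E} {t : ℝ} (ht : 0 ≤ t) (h : inner ℝ (x' - x) u < 0) :
    dist (x + t • u) x < dist (x + t • u) x' := by
  have hxx' : x - x' ≠ 0 := by
    rintro hx
    rw [sub_eq_zero.1 hx, sub_self, inner_zero_left] at h
    exact h.false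
  have hinner : 0 ≤ inner ℝ (x - x') (t • u) := by
    rw [real_inner_smul_right, ← neg_sub, inner_neg_left]
    nlinarith
  have hsq : ‖t • u‖ ^ 2 < ‖(x - x') + t • u‖ ^ 2 := by
    rw [norm_add_sq_real]
    have := norm_pos_iff.2 hxx'
    nlinarith
  rw [dist_eq_norm, dist_eq_norm, add_sub_cancel_left, add_sub_right_comm]
  exact lt_of_pow_lt_pow_left₀ 2 (norm_nonneg _) hsq

theorem exists_inner_neg_of_notMem_convexHull [NormedAddCommGroup E] [InnerProductSpace ℝ E]
    [CompleteSpace E] [Nontrivial E] {K : Set E} (hK : K.Finite) {x : E}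
    (hx : x ∉ convexHull ℝ K) : ∃ u : E, u ≠ 0 ∧ ∀ x' ∈ K, inner ℝ (x' - x) u < 0 := by
  rcases K.eq_empty_or_nonempty with rfl | ⟨p, hp⟩
  · obtain ⟨u, hu⟩ := exists_ne (0 : E)
    exact ⟨u, hu, by simp⟩
  obtain ⟨f, c, hfK, hfx⟩ := geometric_hahn_banach_closed_point (convex_convexHull ℝ K)
    (hK.isCompact_convexHull (𝕜 := ℝ)).isClosed hx
  set u := (InnerProductSpace.toDual ℝ E).symm f
  have hneg : ∀ x' ∈ K, inner ℝ (x' - x) u < 0 := fun x' hx' => by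
    rw [real_inner_comm, inner_sub_right, InnerProductSpace.toDual_symm_apply,
      InnerProductSpace.toDual_symm_apply]
    linarith [hfK x' (subset_convexHull ℝ K hx')]
  exact ⟨u, fun hu => by simpa [hu] using hneg p hp, hneg⟩

theorem exists_nonneg_add_smul_mem_frontier [NormedAddCommGroup E] [NormedSpace ℝ E]
    {C : Set E} (hC : IsClosed C) (hCb : IsBounded C) {x u : E} (hx : x ∈ C) (hu : u ≠ 0) :
    ∃ t : ℝ, 0 ≤ t ∧ x + t • u ∈ frontier C := by
  set g : ℝ → E := fun t => x + t • u
  have hg : Continuous g := by fun_prop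
  set S := {t : ℝ | 0 ≤ t ∧ g t ∈ C}
  have h0S : (0 : ℝ) ∈ S := ⟨le_rfl, by simpa [g] using hx⟩
  have hSbdd : BddAbove S := by
    obtain ⟨R, hR⟩ := hCb.subset_closedBall x
    refine ⟨R / ‖u‖, fun t ht => ?_⟩
    rw [le_div_iff₀ (norm_pos_iff.2 hu)]
    simpa [g, dist_eq_norm, norm_smul, abs_of_nonneg ht.1] using hR ht.2
  have hS : IsClosed S := (isClosed_le continuous_const continuous_id).inter (hC.preimage hg)
  have hsup : sSup S ∈ S := hS.csSup_mem ⟨0, h0S⟩ hSbdd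
  have hexit : MapsTo g (Ioi (sSup S)) Cᶜ := fun t ht hgt =>
    (le_csSup hSbdd ⟨hsup.1.trans ht.le, hgt⟩).not_gt ht
  refine ⟨sSup S, hsup.1, ?_⟩
  rw [frontier_eq_closure_inter_closure]
  exact ⟨subset_closure hsup.2, map_mem_closure (x := sSup S) hg (by simp [closure_Ioi]) hexit⟩

theorem mem_segment_of_mem_segment_of_mem_segment [AddCommGroup E] [Module ℝ E]
    {p q a b : E} (hp : p ∈ segment ℝ q a) (hq : q ∈ segment ℝ p b) (hpq : p ≠ q) :
    p ∈ segment ℝ a b := by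
  obtain ⟨s', s, hs', hs, hss, hp⟩ := hp
  obtain ⟨r', r, hr', hr, hrr, hq⟩ := hq
  obtain rfl : s' = 1 - s := by linarith
  obtain rfl : r' = 1 - r := by linarith
  have hσp : s • a + ((1 - s) * r) • b = (s + (1 - s) * r) • p := by
    linear_combination (norm := module) hp + (1 - s) • hq
  have hσ : 0 < s + (1 - s) * r := by
    by_contra! hσ
    obtain rfl : s = 0 := by nlinarith
    obtain rfl : r = 0 := by nlinarith
    exact hpq (by simp_all)
  refine ⟨s / (s + (1 - s) * r), (1 - s) * r / (s + (1 - s) * r), by positivity, by positivity,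
    by field_simp, ?_⟩
  rw [div_eq_inv_mul, div_eq_inv_mul, mul_smul, mul_smul, ← smul_add, hσp, smul_smul,
    inv_mul_cancel₀ hσ.ne', one_smul]

theorem mem_convexHull_of_mem_convexHull_insert [AddCommGroup E] [Module ℝ E] {A : Set E}
    {p q : E} (hp : p ∈ convexHull ℝ (insert q A)) (hq : q ∈ convexHull ℝ (insert p A))
    (hpq : p ≠ q) : p ∈ convexHull ℝ A := by
  rcases A.eq_empty_or_nonempty with rfl | hA
  · simp_all
  rw [convexHull_insert hA, mem_convexJoin] at hp hq
  obtain ⟨_, rfl, a, ha, hpa⟩ := hp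
  obtain ⟨_, rfl, b, hb, hqb⟩ := hq
  exact (convex_convexHull ℝ A).segment_subset ha hb
    (mem_segment_of_mem_segment_of_mem_segment hpa hqb hpq)

theorem not_affineIndependent_of_mem_convexHull_sdiff [AddCommGroup E] [Module ℝ E]
    {s : Finset E} {x : E} (hx : x ∈ s) (h : x ∈ convexHull ℝ (↑s \ {x})) :
    ¬AffineIndependent ℝ (fun p : s => (p : E)) := by
  intro hind
  refine hind.notMem_affineSpan_sdiff ⟨x, hx⟩ univ
    (affineSpan_mono ℝ ?_ (convexHull_subset_affineSpan _ h))
  rintro z ⟨hz, hzx⟩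
  exact ⟨⟨z, hz⟩, ⟨trivial, fun h => hzx (congrArg Subtype.val h)⟩, rfl⟩

theorem le_ncard_of_mem_convexHull [AddCommGroup E] [Module ℝ E] {η A : Set E} {x : E} {n : ℕ}
    (hgen : ∀ s : Finset E, ↑s ⊆ η → s.card ≤ n → AffineIndependent ℝ (fun p : s => (p : E)))
    (hA : A.Finite) (hxA : insert x A ⊆ η) (hxA' : x ∉ A) (hx : x ∈ convexHull ℝ A) :
    n ≤ A.ncard := by
  by_contra! hcard
  have hA' := hA.insert x
  refine not_affineIndependent_of_mem_convexHull_sdiff (s := hA'.toFinset) (x := x) (by simp)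
    (by rwa [hA'.coe_toFinset, insert_sdiff_self_of_notMem hxA']) (hgen _ (by simpa using hxA) ?_)
  rw [← ncard_eq_toFinset_card _ hA']
  exact (ncard_insert_le x A).trans (by omega)

theorem finite_union_inter_of_isBounded [PseudoMetricSpace E] {χ F s : Set E} {c : E}
    (hχ : ∀ r : ℝ, (χ ∩ closedBall c r).Finite) (hF : F.Finite) (hs : IsBounded s) :
    ((χ ∪ F) ∩ s).Finite := by
  obtain ⟨r, hr⟩ := hs.subset_closedBall c
  refine ((hχ r).union hF).subset ?_
  rintro z ⟨hz | hz, hzs⟩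
  exacts [Or.inl ⟨hz, hr hzs⟩, Or.inr hz]

end

section Voronoi

variable {d : ℕ} {η : Set (EuclideanSpace ℝ (Fin d))} {x : EuclideanSpace ℝ (Fin d)}

def voronoiNeighbors (η : Set (EuclideanSpace ℝ (Fin d))) (x : EuclideanSpace ℝ (Fin d)) :
    Set (EuclideanSpace ℝ (Fin d)) :=
  {x' ∈ η | x' ≠ x ∧ (voronoiCell η x' ∩ voronoiCell η x).Nonempty}

theorem self_mem_voronoiCell (η : Set (EuclideanSpace ℝ (Fin d))) (x : EuclideanSpace ℝ (Fin d)) :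
    x ∈ voronoiCell η x := fun x' _ => by
  simp

theorem isClosed_voronoiCell (η : Set (EuclideanSpace ℝ (Fin d))) (x : EuclideanSpace ℝ (Fin d)) :
    IsClosed (voronoiCell η x) := by
  simp only [voronoiCell, ofPred_forall]
  exact isClosed_biInter fun x' _ =>
    isClosed_le (continuous_id.dist continuous_const) (continuous_id.dist continuous_const)

theorem exists_mem_voronoiCell_of_mem_frontier (hη : ∀ s, IsBounded s → (η ∩ s).Finite)
    {z : EuclideanSpace ℝ (Fin d)} (hz : z ∈ frontier (voronoiCell η x)) :
    ∃ x' ∈ η, x' ≠ x ∧ z ∈ voronoiCell η x' := by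
  set F := (η ∩ closedBall z (dist z x + 2)) \ {x}
  set U := ⋃ x' ∈ F, {w | dist w x' ≤ dist w x}
  have hU : IsClosed U := (hη _ isBounded_closedBall).sdiff.isClosed_biUnion fun x' _ =>
    isClosed_le (continuous_id.dist continuous_const) (continuous_id.dist continuous_const)
  -- Near `z`, a point outside the cell is strictly closer to some nucleus, and all such nuclei
  -- lie in the finite set `F`; so `z` lies in the closed set `U`.
  have hcover : ball z 1 ∩ (voronoiCell η x)ᶜ ⊆ U := by
    rintro w ⟨hwz, hwC⟩
    simp only [voronoiCell, mem_compl_iff, mem_ofPred_eq, not_forall, not_le] at hwC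
    obtain ⟨x', hx', hlt⟩ := hwC
    refine mem_biUnion ⟨⟨hx', ?_⟩, fun h => hlt.ne (congrArg (dist w) h)⟩ hlt.le
    rw [mem_ball] at hwz
    rw [mem_closedBall]
    linarith [dist_triangle x' w z, dist_triangle w z x, dist_comm w x', dist_comm w z]
  have hzU : z ∈ U := hU.closure_subset_iff.2 hcover <| isOpen_ball.inter_closure
    ⟨mem_ball_self one_pos, frontier_subset_closure (frontier_compl (voronoiCell η x) ▸ hz)⟩
  obtain ⟨x', ⟨⟨hx'η, -⟩, hx'x⟩, hle⟩ := mem_iUnion₂.1 hzU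
  exact ⟨x', hx'η, hx'x, fun x'' hx'' =>
    hle.trans ((isClosed_voronoiCell η x).frontier_subset hz x'' hx'')⟩

theorem voronoiNeighbors_finite (hη : ∀ s, IsBounded s → (η ∩ s).Finite) (hx : x ∈ η)
    (hC : IsBounded (voronoiCell η x)) : (voronoiNeighbors η x).Finite := by
  obtain ⟨R, hR⟩ := hC.subset_closedBall x
  refine (hη (closedBall x (2 * R)) isBounded_closedBall).subset ?_
  rintro x' ⟨hx', -, z, hzx', hzx⟩
  have hz : dist z x ≤ R := hR hzx
  refine ⟨hx', ?_⟩
  rw [mem_closedBall]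
  linarith [dist_triangle x' z x, dist_comm x' z, hzx' x hx]

theorem mem_convexHull_voronoiNeighbors [Nontrivial (EuclideanSpace ℝ (Fin d))]
    (hη : ∀ s, IsBounded s → (η ∩ s).Finite) (hx : x ∈ η) (hC : IsBounded (voronoiCell η x)) :
    x ∈ convexHull ℝ (voronoiNeighbors η x) := by
  by_contra hxN
  obtain ⟨u, hu, hsep⟩ :=
    exists_inner_neg_of_notMem_convexHull (voronoiNeighbors_finite hη hx hC) hxN
  obtain ⟨t, ht, hfr⟩ := exists_nonneg_add_smul_mem_frontier (isClosed_voronoiCell η x) hC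
    (self_mem_voronoiCell η x) hu
  obtain ⟨x', hx'η, hx'x, hzx'⟩ := exists_mem_voronoiCell_of_mem_frontier hη hfr
  have hzx := (isClosed_voronoiCell η x).frontier_subset hfr
  have hinner := hsep x' ⟨hx'η, hx'x, _, hzx', hzx⟩
  exact (dist_add_smul_lt_dist_of_inner_neg ht hinner).not_ge (hzx' x hx)

end Voronoi

theorem voronoi_neighbors_card_general {d : ℕ}
    (χ : Set (EuclideanSpace ℝ (Fin d)))
    (hlf : ∀ r : ℝ, (χ ∩ closedBall 0 r).Finite)
    (y : EuclideanSpace ℝ (Fin d)) (hy : y ≠ 0) (v : ℝ)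
    (hgen : ∀ s : Finset (EuclideanSpace ℝ (Fin d)),
      ↑s ⊆ χ ∪ {0, y} → s.card ≤ d + 1 →
      AffineIndependent ℝ (fun p : s => (p : EuclideanSpace ℝ (Fin d))))
    (hbdd : ∀ x ∈ χ ∪ {0, y}, Bornology.IsBounded (voronoiCell (χ ∪ {0, y}) x))
    (hnb0 : ∀ x' ∈ χ ∪ {0, y},
      (voronoiCell (χ ∪ {0, y}) x' ∩ voronoiCell (χ ∪ {0, y}) 0).Nonempty →
      x' ∈ closedBall (0 : EuclideanSpace ℝ (Fin d)) v)
    (hnby : ∀ x' ∈ χ ∪ {0, y},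
      (voronoiCell (χ ∪ {0, y}) x' ∩ voronoiCell (χ ∪ {0, y}) y).Nonempty →
      x' ∈ closedBall y v) :
    d + 1 ≤ (χ ∩ (closedBall 0 v ∪ closedBall y v)).ncard := by
  set η := χ ∪ {0, y}
  set χ₀ := χ ∩ (closedBall 0 v ∪ closedBall y v)
  set A := χ₀ \ {0, y}
  have : Nontrivial (EuclideanSpace ℝ (Fin d)) := nontrivial_of_ne y 0 hy
  have hη : ∀ s, IsBounded s → (η ∩ s).Finite := fun _ =>
    finite_union_inter_of_isBounded hlf (toFinite _)
  have h0η : 0 ∈ η := by simp [η]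
  have hyη : y ∈ η := by simp [η]
  have hN0 : voronoiNeighbors η 0 ⊆ insert y A := fun x' ⟨hx', hx'0, hnb⟩ => by
    have := hnb0 x' hx' hnb
    simp only [η, A, χ₀, mem_union, mem_insert_iff, mem_singleton_iff, mem_sdiff, mem_inter_iff]
      at hx' ⊢
    tauto
  have hNy : voronoiNeighbors η y ⊆ insert 0 A := fun x' ⟨hx', hx'y, hnb⟩ => by
    have := hnby x' hx' hnb
    simp only [η, A, χ₀, mem_union, mem_insert_iff, mem_singleton_iff, mem_sdiff, mem_inter_iff]
      at hx' ⊢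
    tauto
  have h0A : (0 : EuclideanSpace ℝ (Fin d)) ∈ convexHull ℝ A :=
    mem_convexHull_of_mem_convexHull_insert
      (convexHull_mono hN0 (mem_convexHull_voronoiNeighbors hη h0η (hbdd 0 h0η)))
      (convexHull_mono hNy (mem_convexHull_voronoiNeighbors hη hyη (hbdd y hyη))) hy.symm
  have hχ₀ : χ₀.Finite := (hη _ (isBounded_closedBall.union isBounded_closedBall)).subset
    (inter_subset_inter_left _ subset_union_left)
  calc d + 1 ≤ A.ncard := le_ncard_of_mem_convexHull hgen hχ₀.sdiff
        (insert_subset h0η (sdiff_subset.trans (inter_subset_left.trans subset_union_left)))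
        (by simp [A]) h0A
    _ ≤ χ₀.ncard := ncard_le_ncard sdiff_subset hχ₀

/-- If all Voronoi neighbors of `0` and of `y` (w.r.t. `χ ∪ {0,y}`) lie in `B(0,v)` and
`B(y,v)` respectively, all cells being bounded and the points in general position, then
`χ ∩ (B(0,v) ∪ B(y,v))` contains at least `d+1` points. -/
theorem voronoi_neighbors_card {d : ℕ} (hd : 1 ≤ d)
    (χ : Set (EuclideanSpace ℝ (Fin d)))
    (hlf : ∀ r : ℝ, (χ ∩ closedBall 0 r).Finite)
    (y : EuclideanSpace ℝ (Fin d)) (hy : y ≠ 0) (v : ℝ) (hv : 0 ≤ v)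
    (hgen : ∀ s : Finset (EuclideanSpace ℝ (Fin d)),
      ↑s ⊆ χ ∪ {0, y} → s.card ≤ d + 1 →
      AffineIndependent ℝ (fun p : s => (p : EuclideanSpace ℝ (Fin d))))
    (hbdd : ∀ x ∈ χ ∪ {0, y}, Bornology.IsBounded (voronoiCell (χ ∪ {0, y}) x))
    (hnb0 : ∀ x' ∈ χ ∪ {0, y},
      (voronoiCell (χ ∪ {0, y}) x' ∩ voronoiCell (χ ∪ {0, y}) 0).Nonempty →
      x' ∈ closedBall (0 : EuclideanSpace ℝ (Fin d)) v)
    (hnby : ∀ x' ∈ χ ∪ {0, y},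
      (voronoiCell (χ ∪ {0, y}) x' ∩ voronoiCell (χ ∪ {0, y}) y).Nonempty →
      x' ∈ closedBall y v) :
    d + 1 ≤ (χ ∩ (closedBall 0 v ∪ closedBall y v)).ncard :=
  voronoi_neighbors_card_general χ hlf y hy v hgen hbdd hnb0 hnby
end

section
/- Let Δ(x₁,x₂,y₃) be a triangle in ℝ² with two vertices x₁ = r u₁, x₂ = r u₂ on the sphere of radius r (u₁,u₂ ∈ S¹, u₁ ≠ u₂). If the area of the triangle is less than v and its circumradius is at most r, then y₃ lies in the intersection of the ball B(0, 3r) and the strip of points at distance at most 2v/(r·|u₁ − u₂|) from the line through x₁ and x₂; consequently the set of admissible y₃ has Lebesgue measure at most 24·v/|u₁ − u₂|. -/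
/-!
Put `x₁ = r • u₁`, `x₂ = r • u₂` and take an orthonormal basis whose first vector points along
`x₂ - x₁`, which has length `k = r * dist u₁ u₂`; let `t` be the second coordinate of `y₃ - x₁`.
The parallelogram spanned by `x₂ - x₁` and `y₃ - x₁` has area `k * |t|` and is covered by the
triangle and its point reflection, so the triangle has area at least `k * |t| / 2`. Hence
`|t| < 2 * v / k`, and `|t|` bounds the distance from `y₃` to the line `x₁x₂`. The circumcentre
`z` satisfies `dist z x₁ ≤ r`, so `‖y₃‖ ≤ dist y₃ z + dist z x₁ + ‖x₁‖ ≤ 3 * r`. In the chosen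
coordinates the admissible set thus lies in a box with sides `6 * r` and `4 * v / k`.
-/

open Real MeasureTheory Metric

/-- The set of admissible third vertices `y₃` of a triangle with two vertices `r•u₁, r•u₂`
on the sphere of radius `r`, area less than `v` and circumradius at most `r`. -/
def admissibleThirdVertex (r v : ℝ) (u₁ u₂ : EuclideanSpace ℝ (Fin 2)) :
    Set (EuclideanSpace ℝ (Fin 2)) :=
  {y₃ | (volume (convexHull ℝ ({r • u₁, r • u₂, y₃} : Set (EuclideanSpace ℝ (Fin 2))))).toReal < v ∧
    ∃ z : EuclideanSpace ℝ (Fin 2), ∃ ρ : ℝ, ρ ≤ r ∧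
      dist (r • u₁) z = ρ ∧ dist (r • u₂) z = ρ ∧ dist y₃ z = ρ}

open Set Pointwise Module

lemma smul_add_smul_mem_convexHull_zero {V : Type*} [AddCommGroup V] [Module ℝ V] (p q : V)
    {s t : ℝ} (hs : 0 ≤ s) (ht : 0 ≤ t) (hst : s + t ≤ 1) :
    s • p + t • q ∈ convexHull ℝ ({0, p, q} : Set V) := by
  have h := (convex_convexHull ℝ ({0, p, q} : Set V)).sum_mem (t := Finset.univ)
    (w := ![1 - s - t, s, t]) (z := ![0, p, q])
    (by intro i _; fin_cases i <;> simp <;> linarith)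
    (by
      simp only [Fin.sum_univ_three, Matrix.cons_val_zero, Matrix.cons_val_one,
        Matrix.cons_val_two, Matrix.tail_cons, Matrix.head_cons]
      ring)
    (by intro i _; fin_cases i <;> apply subset_convexHull <;> simp)
  simpa [Fin.sum_univ_three] using h

lemma measure_parallelepiped_le_two_mul_measure_convexHull {E : Type*} [NormedAddCommGroup E]
    [NormedSpace ℝ E] [FiniteDimensional ℝ E] [MeasurableSpace E] [BorelSpace E]
    (μ : Measure E) [μ.IsAddHaarMeasure] (p q : E) :
    μ (parallelepiped ![p, q]) ≤ 2 * μ (convexHull ℝ {0, p, q}) := by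
  set T := convexHull ℝ ({0, p, q} : Set E)
  have hcover : parallelepiped ![p, q] ⊆ T ∪ ((p + q) +ᵥ -T) := by
    intro x hx
    obtain ⟨t, ⟨ht₀, ht₁⟩, rfl⟩ := (mem_parallelepiped_iff _ _).1 hx
    have h0 : 0 ≤ t 0 ∧ t 0 ≤ 1 := ⟨ht₀ 0, ht₁ 0⟩
    have h1 : 0 ≤ t 1 ∧ t 1 ≤ 1 := ⟨ht₀ 1, ht₁ 1⟩
    simp only [Fin.sum_univ_two, Matrix.cons_val_zero, Matrix.cons_val_one]
    by_cases h : t 0 + t 1 ≤ 1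
    · exact Or.inl (smul_add_smul_mem_convexHull_zero p q h0.1 h1.1 h)
    · refine Or.inr (mem_vadd_set.2 ⟨-((1 - t 0) • p + (1 - t 1) • q), ?_, ?_⟩)
      · exact neg_mem_neg.2 (smul_add_smul_mem_convexHull_zero p q (by linarith) (by linarith)
          (by linarith))
      · simp only [vadd_eq_add]
        module
  calc μ (parallelepiped ![p, q]) ≤ μ (T ∪ ((p + q) +ᵥ -T)) := measure_mono hcover
    _ ≤ μ T + μ ((p + q) +ᵥ -T) := measure_union_le _ _
    _ = 2 * μ T := by rw [measure_vadd, Measure.measure_neg, two_mul]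

section InnerProductSpace

variable {E : Type*} [NormedAddCommGroup E] [InnerProductSpace ℝ E]

lemma exists_orthonormalBasis_apply_eq [FiniteDimensional ℝ E] {ι : Type*} [Fintype ι]
    (hcard : finrank ℝ E = Fintype.card ι) (i : ι) {e : E} (he : ‖e‖ = 1) :
    ∃ β : OrthonormalBasis ι ℝ E, β i = e := by
  have hon : Orthonormal ℝ (({i} : Set ι).domRestrict fun _ ↦ e) :=
    ⟨fun _ ↦ he, fun j k hjk ↦ absurd (Subsingleton.elim j k) hjk⟩
  obtain ⟨β, hβ⟩ := hon.exists_orthonormalBasis_extension_of_card_eq hcard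
  exact ⟨β, hβ i rfl⟩

lemma det_smul_apply_zero (β : OrthonormalBasis (Fin 2) ℝ E) (k : ℝ) (w : E) :
    β.toBasis.det ![k • β 0, w] = k * β.repr w 1 := by
  simp [Basis.det_apply, Matrix.det_fin_two, Basis.toMatrix_apply]

lemma infDist_affineSpan_pair_le_abs_repr (β : OrthonormalBasis (Fin 2) ℝ E) {a b : E} {k : ℝ}
    (hk : k ≠ 0) (h : b - a = k • β 0) (c : E) :
    infDist c (affineSpan ℝ {a, b}) ≤ |β.repr (c - a) 1| := by
  have hfoot : c - AffineMap.lineMap a b (β.repr (c - a) 0 / k) = β.repr (c - a) 1 • β 1 := by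
    have hc := β.sum_repr (c - a)
    rw [Fin.sum_univ_two] at hc
    rw [AffineMap.lineMap_apply_module', h, smul_smul, div_mul_cancel₀ _ hk]
    linear_combination (norm := module) -hc
  calc infDist c (affineSpan ℝ {a, b})
      ≤ dist c (AffineMap.lineMap a b (β.repr (c - a) 0 / k)) :=
        infDist_le_dist_of_mem (AffineMap.lineMap_mem_affineSpan_pair _ _ _)
    _ = |β.repr (c - a) 1| := by
        rw [dist_eq_norm, hfoot, norm_smul, β.orthonormal.1 1, mul_one, Real.norm_eq_abs]

variable [FiniteDimensional ℝ E] [MeasurableSpace E] [BorelSpace E]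

lemma ofReal_abs_det_div_two_le_volume_convexHull (β : OrthonormalBasis (Fin 2) ℝ E)
    (a b c : E) :
    ENNReal.ofReal (|β.toBasis.det ![b - a, c - a]| / 2) ≤ volume (convexHull ℝ {a, b, c}) := by
  have htrans : convexHull ℝ {a, b, c} = a +ᵥ convexHull ℝ {0, b - a, c - a} := by
    rw [← convexHull_vadd]
    simp [vadd_set_insert]
  have hpar := measure_parallelepiped_le_two_mul_measure_convexHull volume (b - a) (c - a)
  rw [← β.addHaar_eq_volume, Measure.addHaar_parallelepiped, β.addHaar_eq_volume] at hpar
  rw [htrans, measure_vadd, ENNReal.ofReal_div_of_pos two_pos, ENNReal.ofReal_ofNat]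
  exact ENNReal.div_le_of_le_mul' hpar

lemma ofReal_mul_abs_repr_div_two_le_volume_convexHull (β : OrthonormalBasis (Fin 2) ℝ E)
    {a b : E} {k : ℝ} (h : b - a = k • β 0) (c : E) :
    ENNReal.ofReal (|k| * |β.repr (c - a) 1| / 2) ≤ volume (convexHull ℝ {a, b, c}) := by
  simpa [h, det_smul_apply_zero, abs_mul] using ofReal_abs_det_div_two_le_volume_convexHull β a b c

lemma volume_setOf_repr_mem_Icc {ι : Type*} [Fintype ι] (β : OrthonormalBasis ι ℝ E)
    (lo hi : ι → ℝ) :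
    volume {y | ∀ i, β.repr y i ∈ Icc (lo i) (hi i)} = ∏ i, ENNReal.ofReal (hi i - lo i) := by
  have hmp : MeasurePreserving (fun y ↦ (β.repr y).ofLp) volume volume :=
    (PiLp.volume_preserving_ofLp ι).comp β.measurePreserving_repr
  have hpre : {y | ∀ i, β.repr y i ∈ Icc (lo i) (hi i)} =
      (fun y ↦ (β.repr y).ofLp) ⁻¹' Icc lo hi := by
    ext y
    simp [Pi.le_def, forall_and]
  rw [hpre, hmp.measure_preimage measurableSet_Icc.nullMeasurableSet, Real.volume_Icc_pi]

end InnerProductSpace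

local notation "ℝ²" => EuclideanSpace ℝ (Fin 2)

lemma norm_le_three_mul_of_mem_admissibleThirdVertex {r v : ℝ} {u₁ u₂ y : ℝ²}
    (hu₁ : ‖u₁‖ = 1) (hy : y ∈ admissibleThirdVertex r v u₁ u₂) : ‖y‖ ≤ 3 * r := by
  obtain ⟨-, z, ρ, hρ, h₁, -, h₃⟩ := hy
  have hr : 0 ≤ r := (h₁ ▸ dist_nonneg).trans hρ
  calc ‖y‖ ≤ dist y z + dist z (r • u₁) + ‖r • u₁‖ := by
        simpa using dist_triangle4 y z (r • u₁) 0
    _ = ρ + ρ + r := by rw [h₃, dist_comm, h₁, norm_smul, hu₁, Real.norm_of_nonneg hr, mul_one]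
    _ ≤ 3 * r := by linarith

lemma abs_repr_sub_lt_of_mem_admissibleThirdVertex {r v k : ℝ} {u₁ u₂ y : ℝ²}
    (β : OrthonormalBasis (Fin 2) ℝ ℝ²) (hk : 0 < k) (h : r • u₂ - r • u₁ = k • β 0)
    (hy : y ∈ admissibleThirdVertex r v u₁ u₂) : |β.repr (y - r • u₁) 1| < 2 * v / k := by
  have harea := ofReal_mul_abs_repr_div_two_le_volume_convexHull β h y
  have hfin : volume (convexHull ℝ {r • u₁, r • u₂, y}) ≠ ⊤ :=
    ((Set.toFinite _).isCompact_convexHull ℝ).measure_lt_top.ne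
  rw [ENNReal.ofReal_le_iff_le_toReal hfin, abs_of_pos hk] at harea
  rw [lt_div_iff₀ hk]
  linarith [hy.1]

theorem third_vertex_localization_general (r v : ℝ) (hr : 0 < r)
    (u₁ u₂ : EuclideanSpace ℝ (Fin 2)) (hu₁ : ‖u₁‖ = 1) (hne : u₁ ≠ u₂) :
    (∀ y₃ ∈ admissibleThirdVertex r v u₁ u₂,
      y₃ ∈ closedBall (0 : EuclideanSpace ℝ (Fin 2)) (3 * r) ∧
      Metric.infDist y₃
          ↑(affineSpan ℝ ({r • u₁, r • u₂} : Set (EuclideanSpace ℝ (Fin 2))))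
        ≤ 2 * v / (r * dist u₁ u₂)) ∧
    volume (admissibleThirdVertex r v u₁ u₂) ≤ ENNReal.ofReal (24 * v / dist u₁ u₂) := by
  have hd : 0 < dist u₁ u₂ := dist_pos.2 hne
  set k := r * dist u₁ u₂
  have hk : 0 < k := mul_pos hr hd
  have hnorm : ‖r • u₂ - r • u₁‖ = k := by
    rw [← smul_sub, norm_smul, Real.norm_of_nonneg hr.le, ← dist_eq_norm, dist_comm]
  have he : ‖k⁻¹ • (r • u₂ - r • u₁)‖ = 1 := by
    rw [norm_smul, hnorm, norm_inv, Real.norm_of_nonneg hk.le, inv_mul_cancel₀ hk.ne']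
  obtain ⟨β, hβ⟩ := exists_orthonormalBasis_apply_eq (by simp) (0 : Fin 2) he
  have hdir : r • u₂ - r • u₁ = k • β 0 := by rw [hβ, smul_inv_smul₀ hk.ne']
  have hball y (hy : y ∈ admissibleThirdVertex r v u₁ u₂) :=
    norm_le_three_mul_of_mem_admissibleThirdVertex hu₁ hy
  have hstrip y (hy : y ∈ admissibleThirdVertex r v u₁ u₂) :=
    abs_repr_sub_lt_of_mem_admissibleThirdVertex β hk hdir hy
  refine ⟨fun y hy ↦ ⟨mem_closedBall_zero_iff.2 (hball y hy),
    (infDist_affineSpan_pair_le_abs_repr β hk.ne' hdir y).trans (hstrip y hy).le⟩, ?_⟩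
  set c := β.repr (r • u₁) 1
  have hbox : admissibleThirdVertex r v u₁ u₂ ⊆
      {y | ∀ i, β.repr y i ∈ Icc (![-(3 * r), c - 2 * v / k] i) (![3 * r, c + 2 * v / k] i)} := by
    intro y hy
    have h0 := abs_le.1 (((PiLp.norm_apply_le _ 0).trans (β.repr.norm_map y).le).trans (hball y hy))
    have h1 := hstrip y hy
    rw [map_sub, PiLp.sub_apply, abs_sub_lt_iff] at h1
    simp only [Fin.forall_fin_two, mem_Icc, Matrix.cons_val_zero, Matrix.cons_val_one]
    exact ⟨h0, by linarith, by linarith⟩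
  calc volume (admissibleThirdVertex r v u₁ u₂)
      ≤ ENNReal.ofReal (6 * r) * ENNReal.ofReal (2 * (2 * v / k)) := by
        refine (measure_mono hbox).trans_eq ?_
        rw [volume_setOf_repr_mem_Icc, Fin.prod_univ_two]
        congr 2 <;> simp only [Matrix.cons_val_zero, Matrix.cons_val_one] <;> ring
    _ = ENNReal.ofReal (24 * v / dist u₁ u₂) := by
        rw [← ENNReal.ofReal_mul (by positivity)]
        congr 1
        simp only [k]
        field_simp
        ring

theorem third_vertex_localization (r v : ℝ) (hr : 0 < r) (hv : 0 < v)
    (u₁ u₂ : EuclideanSpace ℝ (Fin 2)) (hu₁ : ‖u₁‖ = 1) (hu₂ : ‖u₂‖ = 1) (hne : u₁ ≠ u₂) :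
    (∀ y₃ ∈ admissibleThirdVertex r v u₁ u₂,
      y₃ ∈ closedBall (0 : EuclideanSpace ℝ (Fin 2)) (3 * r) ∧
      Metric.infDist y₃
          ↑(affineSpan ℝ ({r • u₁, r • u₂} : Set (EuclideanSpace ℝ (Fin 2))))
        ≤ 2 * v / (r * dist u₁ u₂)) ∧
    volume (admissibleThirdVertex r v u₁ u₂) ≤ ENNReal.ofReal (24 * v / dist u₁ u₂) :=
  third_vertex_localization_general r v hr u₁ u₂ hu₁ hne
end
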